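/- arXiv:1003.3589 — 2 statements merged into one kernel-verified Lean document; each statement's English description precedes it below -/
import Mathlib

section
/- Suppose e₁ = e₂ = 0, b₂ = 0 and a₂₁ = a₁₁. Then the function H(x₁,x₂) = a₁₂·ln x₂ − a₂₂·ln x₁ − b₁/x₂ − a₁₁·x₁/x₂ is a first integral of the two-dimensional Lotka–Volterra system with constant terms on the open positive quadrant {(x₁,x₂) : x₁ > 0, x₂ > 0}. -/
open Real

section FirstIntegral

variable (b1 a11 a12 a22 : ℝ)

theorem hasDerivAt_firstIntegral_fst (x2 : ℝ) {x1 : ℝ} (hx1 : x1 ≠ 0) :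
    HasDerivAt (fun t => a12 * log x2 - a22 * log t - b1 / x2 - a11 * t / x2)
      (-a22 / x1 - a11 / x2) x1 := by
  have hlog := ((hasDerivAt_log hx1).const_mul a22).const_sub (a12 * log x2)
  have hlin := ((hasDerivAt_id x1).const_mul a11).div_const x2
  exact ((hlog.sub_const (b1 / x2)).sub hlin).congr_deriv (by ring)

theorem hasDerivAt_firstIntegral_snd (x1 : ℝ) {x2 : ℝ} (hx2 : x2 ≠ 0) :
    HasDerivAt (fun t => a12 * log t - a22 * log x1 - b1 / t - a11 * x1 / t)
      (a12 / x2 + b1 / x2 ^ 2 + a11 * x1 / x2 ^ 2) x2 := by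
  have hlog := ((hasDerivAt_log hx2).const_mul a12).sub_const (a22 * log x1)
  have hb1 := (hasDerivAt_inv hx2).const_mul b1
  have ha11 := (hasDerivAt_inv hx2).const_mul (a11 * x1)
  have h := (hlog.sub hb1).sub ha11
  simp only [← div_eq_mul_inv] at h
  exact h.congr_deriv (by ring)

end FirstIntegral

/-- Case `e₁ = e₂ = 0`, `l₁ = 0`, `l₂ = −1` (so `b₂ = 0`, `a₂₁ = a₁₁`):
`H = a₁₂ ln x₂ − a₂₂ ln x₁ − b₁/x₂ − a₁₁ x₁/x₂` is a first integral on the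
positive quadrant. -/
theorem stmt_7 (b1 b2 a11 a12 a21 a22 e1 e2 : ℝ)
    (he1 : e1 = 0) (he2 : e2 = 0) (hb2 : b2 = 0) (h21 : a21 = a11) :
    ∀ x1 x2 : ℝ, 0 < x1 → 0 < x2 →
      (x1 * (b1 + a11 * x1 + a12 * x2) + e1) *
        deriv (fun t => a12 * Real.log x2 - a22 * Real.log t
          - b1 / x2 - a11 * t / x2) x1 +
      (x2 * (b2 + a21 * x1 + a22 * x2) + e2) *
        deriv (fun t => a12 * Real.log t - a22 * Real.log x1
          - b1 / t - a11 * x1 / t) x2 = 0 := by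
  intro x1 x2 hx1 hx2
  subst e1 e2 b2 a21
  rw [(hasDerivAt_firstIntegral_fst b1 a11 a12 a22 x2 hx1.ne').deriv,
    (hasDerivAt_firstIntegral_snd b1 a11 a12 a22 x1 hx2.ne').deriv]
  -- both terms equal ±(b1 + a11 x1 + a12 x2)(a11 x1 + a22 x2) / x2
  field_simp
  ring
end

section
/- Suppose the real parameters satisfy b₁ = b₂ = b₃ = 0 and aᵢⱼ = −2aⱼⱼ for all i ≠ j with i,j ∈ {1,2,3} (with e₁, e₂, e₃ arbitrary). Then the function H(x₁,x₂,x₃) = a₁₁²a₂₂x₁²x₂ − a₁₁²a₃₃x₁²x₃ − a₁₁a₂₂²x₁x₂² + a₁₁a₃₃²x₁x₃² + a₂₂²a₃₃x₂²x₃ − a₂₂a₃₃²x₂x₃² + (−a₁₁a₂₂e₂ + a₁₁a₃₃e₃)x₁ + (a₁₁a₂₂e₁ − a₂₂a₃₃e₃)x₂ + (a₂₂a₃₃e₂ − a₁₁a₃₃e₁)x₃ is a first integral of the three-dimensional Lotka–Volterra system with constant terms on all of ℝ³. -/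
/-! `H` is quadratic in each coordinate, so each partial derivative is read off from the
derivative of a one-variable quadratic. With `bᵢ = 0` and `aᵢⱼ = -2aⱼⱼ`, the orbital
derivative `∑ fᵢ ∂ᵢH` then vanishes as a polynomial identity. -/

theorem deriv_quadratic {𝕜 : Type*} [NontriviallyNormedField 𝕜] (a b c x : 𝕜) :
    deriv (fun t => a * t ^ 2 + b * t + c) x = 2 * a * x + b := by
  have h : HasDerivAt (fun t => a * t ^ 2 + b * t + c) (2 * a * x + b) x :=
    ((((hasDerivAt_pow 2 x).const_mul a).add ((hasDerivAt_id' x).const_mul b)).add_const c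
      ).congr_deriv (by ring)
  exact h.deriv

def lvFirstIntegral (a11 a22 a33 e1 e2 e3 x1 x2 x3 : ℝ) : ℝ :=
  a11 ^ 2 * a22 * x1 ^ 2 * x2 - a11 ^ 2 * a33 * x1 ^ 2 * x3
    - a11 * a22 ^ 2 * x1 * x2 ^ 2 + a11 * a33 ^ 2 * x1 * x3 ^ 2
    + a22 ^ 2 * a33 * x2 ^ 2 * x3 - a22 * a33 ^ 2 * x2 * x3 ^ 2
    + (-a11 * a22 * e2 + a11 * a33 * e3) * x1
    + (a11 * a22 * e1 - a22 * a33 * e3) * x2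
    + (a22 * a33 * e2 - a11 * a33 * e1) * x3

section
variable (a11 a22 a33 e1 e2 e3 x1 x2 x3 : ℝ)

theorem deriv_lvFirstIntegral_first :
    deriv (fun t => lvFirstIntegral a11 a22 a33 e1 e2 e3 t x2 x3) x1 =
      2 * a11 ^ 2 * (a22 * x2 - a33 * x3) * x1
        - a11 * a22 ^ 2 * x2 ^ 2 + a11 * a33 ^ 2 * x3 ^ 2 - a11 * a22 * e2 + a11 * a33 * e3 := by
  have hquad : (fun t => lvFirstIntegral a11 a22 a33 e1 e2 e3 t x2 x3) = fun t =>
      a11 ^ 2 * (a22 * x2 - a33 * x3) * t ^ 2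
        + (-a11 * a22 ^ 2 * x2 ^ 2 + a11 * a33 ^ 2 * x3 ^ 2 - a11 * a22 * e2 + a11 * a33 * e3) * t
        + lvFirstIntegral a11 a22 a33 e1 e2 e3 0 x2 x3 := by
    funext t; unfold lvFirstIntegral; ring
  rw [hquad, deriv_quadratic]
  ring

theorem deriv_lvFirstIntegral_second :
    deriv (fun t => lvFirstIntegral a11 a22 a33 e1 e2 e3 x1 t x3) x2 =
      2 * a22 ^ 2 * (a33 * x3 - a11 * x1) * x2
        + a11 ^ 2 * a22 * x1 ^ 2 - a22 * a33 ^ 2 * x3 ^ 2 + a11 * a22 * e1 - a22 * a33 * e3 := by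
  have hquad : (fun t => lvFirstIntegral a11 a22 a33 e1 e2 e3 x1 t x3) = fun t =>
      a22 ^ 2 * (a33 * x3 - a11 * x1) * t ^ 2
        + (a11 ^ 2 * a22 * x1 ^ 2 - a22 * a33 ^ 2 * x3 ^ 2 + a11 * a22 * e1 - a22 * a33 * e3) * t
        + lvFirstIntegral a11 a22 a33 e1 e2 e3 x1 0 x3 := by
    funext t; unfold lvFirstIntegral; ring
  rw [hquad, deriv_quadratic]
  ring

theorem deriv_lvFirstIntegral_third :
    deriv (fun t => lvFirstIntegral a11 a22 a33 e1 e2 e3 x1 x2 t) x3 =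
      2 * a33 ^ 2 * (a11 * x1 - a22 * x2) * x3
        - a11 ^ 2 * a33 * x1 ^ 2 + a22 ^ 2 * a33 * x2 ^ 2 + a22 * a33 * e2 - a11 * a33 * e1 := by
  have hquad : (fun t => lvFirstIntegral a11 a22 a33 e1 e2 e3 x1 x2 t) = fun t =>
      a33 ^ 2 * (a11 * x1 - a22 * x2) * t ^ 2
        + (-a11 ^ 2 * a33 * x1 ^ 2 + a22 ^ 2 * a33 * x2 ^ 2 + a22 * a33 * e2 - a11 * a33 * e1) * t
        + lvFirstIntegral a11 a22 a33 e1 e2 e3 x1 x2 0 := by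
    funext t; unfold lvFirstIntegral; ring
  rw [hquad, deriv_quadratic]
  ring

end

/-- Lemma 2, case 3: with `bᵢ = 0` and `aᵢⱼ = −2aⱼⱼ` for `i ≠ j`, the cubic
polynomial `H` given in (26) of the paper is a first integral of the 3D LV
system on `ℝ³`. -/
theorem stmt_13 (b1 b2 b3 a11 a12 a13 a21 a22 a23 a31 a32 a33 e1 e2 e3 : ℝ)
    (hb1 : b1 = 0) (hb2 : b2 = 0) (hb3 : b3 = 0)
    (h12 : a12 = -2 * a22) (h13 : a13 = -2 * a33)
    (h21 : a21 = -2 * a11) (h23 : a23 = -2 * a33)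
    (h31 : a31 = -2 * a11) (h32 : a32 = -2 * a22) :
    ∀ x1 x2 x3 : ℝ,
      (x1 * (b1 + a11 * x1 + a12 * x2 + a13 * x3) + e1) *
        deriv (fun t => a11 ^ 2 * a22 * t ^ 2 * x2 - a11 ^ 2 * a33 * t ^ 2 * x3
          - a11 * a22 ^ 2 * t * x2 ^ 2 + a11 * a33 ^ 2 * t * x3 ^ 2
          + a22 ^ 2 * a33 * x2 ^ 2 * x3 - a22 * a33 ^ 2 * x2 * x3 ^ 2
          + (-a11 * a22 * e2 + a11 * a33 * e3) * t
          + (a11 * a22 * e1 - a22 * a33 * e3) * x2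
          + (a22 * a33 * e2 - a11 * a33 * e1) * x3) x1 +
      (x2 * (b2 + a21 * x1 + a22 * x2 + a23 * x3) + e2) *
        deriv (fun t => a11 ^ 2 * a22 * x1 ^ 2 * t - a11 ^ 2 * a33 * x1 ^ 2 * x3
          - a11 * a22 ^ 2 * x1 * t ^ 2 + a11 * a33 ^ 2 * x1 * x3 ^ 2
          + a22 ^ 2 * a33 * t ^ 2 * x3 - a22 * a33 ^ 2 * t * x3 ^ 2
          + (-a11 * a22 * e2 + a11 * a33 * e3) * x1
          + (a11 * a22 * e1 - a22 * a33 * e3) * t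
          + (a22 * a33 * e2 - a11 * a33 * e1) * x3) x2 +
      (x3 * (b3 + a31 * x1 + a32 * x2 + a33 * x3) + e3) *
        deriv (fun t => a11 ^ 2 * a22 * x1 ^ 2 * x2 - a11 ^ 2 * a33 * x1 ^ 2 * t
          - a11 * a22 ^ 2 * x1 * x2 ^ 2 + a11 * a33 ^ 2 * x1 * t ^ 2
          + a22 ^ 2 * a33 * x2 ^ 2 * t - a22 * a33 ^ 2 * x2 * t ^ 2
          + (-a11 * a22 * e2 + a11 * a33 * e3) * x1
          + (a11 * a22 * e1 - a22 * a33 * e3) * x2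
          + (a22 * a33 * e2 - a11 * a33 * e1) * t) x3 = 0 := by
  intro x1 x2 x3
  have h1 := deriv_lvFirstIntegral_first a11 a22 a33 e1 e2 e3 x1 x2 x3
  have h2 := deriv_lvFirstIntegral_second a11 a22 a33 e1 e2 e3 x1 x2 x3
  have h3 := deriv_lvFirstIntegral_third a11 a22 a33 e1 e2 e3 x1 x2 x3
  -- unfolded, the three formulas match the partial derivatives of the statement syntactically
  simp only [lvFirstIntegral] at h1 h2 h3
  rw [h1, h2, h3]
  subst hb1 hb2 hb3 h12 h13 h21 h23 h31 h32
  ring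
end
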